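/- Let p be an odd prime and k, t positive integers with t even. Consider the F_{p^k}-bilinear form B(x,y) = Tr_{F_{p^{4kt}}/F_{p^k}}(μ(x y^{p^{kt}} + y x^{p^{kt}})) on F_{p^{4kt}}, where μ ∈ F_{p^{2k}} is nonzero with μ^{p^k} = −μ. Then the radical W = {x ∈ F_{p^{4kt}} : B(x,y) = 0 for all y} equals {x ∈ F_{p^{4kt}} : x^{p^{2kt}} + x = 0}, and dim_{F_{p^k}} W = 2t. -/

import Mathlib

/-!
With `q = p ^ k` and `Tr z = ∑_{i < 4t} z ^ q ^ i`, the trace is additive and invariant under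
`z ↦ z ^ q`, so the Frobenius can be moved from `y` to `x`:
`Tr (μ x y ^ q ^ t) = Tr (μ ^ q ^ (3t) x ^ q ^ (3t) y)`. As `t` is even, `q ^ (3t)` fixes
`μ ∈ 𝔽_{q²}`, hence `B(x, y) = Tr (c(x) y)` with `c(x) = μ (x ^ q ^ (2t) + x) ^ q ^ t`. The trace
form is nondegenerate (`Tr` is a nonzero polynomial of degree `q ^ (4t - 1) < |F|`), so the radical
is `{x | c(x) = 0} = {x | x ^ q ^ (2t) + x = 0}`. This is the root set of the separable polynomial
`X ^ Q + X`, `Q = q ^ (2t)`, which divides `X ^ (Q²) - X` and therefore has `Q` roots in `F`.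
-/

open Finset Polynomial

/-- When `Fintype.card F = p ^ (k * n)` this is the trace of `F` over its subfield `𝔽_{p ^ k}`. -/
def frobeniusTrace {F : Type*} [Field F] (p k n : ℕ) (z : F) : F :=
  ∑ i ∈ range n, z ^ p ^ (k * i)

lemma pow_pow_eq_self_of_pow_eq_self {M : Type*} [Monoid M] {x : M} {n : ℕ} (h : x ^ n = x)
    (j : ℕ) : x ^ n ^ j = x := by
  have hfix : Function.IsFixedPt (fun z : M => z ^ n) x := h
  have := hfix.iterate j
  rwa [pow_iterate] at this

section frobeniusTrace

variable {F : Type*} [Field F] {p k n : ℕ}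

lemma frobeniusTrace_add [ExpChar F p] (a b : F) :
    frobeniusTrace p k n (a + b) = frobeniusTrace p k n a + frobeniusTrace p k n b := by
  simp only [frobeniusTrace, add_pow_expChar_pow, sum_add_distrib]

lemma frobeniusTrace_zero [ExpChar F p] : frobeniusTrace p k n (0 : F) = 0 := by
  simpa using frobeniusTrace_add (p := p) (k := k) (n := n) (0 : F) 0

variable [Fintype F]

lemma frobeniusTrace_pow (hF : Fintype.card F = p ^ (k * n)) (z : F) :
    frobeniusTrace p k n (z ^ p ^ k) = frobeniusTrace p k n z := by
  have hshift : ∀ i, (z ^ p ^ k) ^ p ^ (k * i) = z ^ p ^ (k * (i + 1)) := fun i => by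
    rw [← pow_mul, ← pow_add, Nat.mul_succ, Nat.add_comm]
  have hcycle := (sum_range_succ (fun i => z ^ p ^ (k * i)) n).symm.trans
    (sum_range_succ' (fun i => z ^ p ^ (k * i)) n)
  rw [← hF, FiniteField.pow_card, mul_zero, pow_zero, pow_one] at hcycle
  simpa only [frobeniusTrace, hshift] using (add_right_cancel hcycle).symm

lemma frobeniusTrace_pow_pow (hF : Fintype.card F = p ^ (k * n)) (j : ℕ) (z : F) :
    frobeniusTrace p k n (z ^ p ^ (k * j)) = frobeniusTrace p k n z := by
  induction j with
  | zero => simp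
  | succ j ih => rw [Nat.mul_succ, pow_add, pow_mul, frobeniusTrace_pow hF, ih]

lemma frobeniusTrace_mul_pow_pow (hF : Fintype.card F = p ^ (k * n)) {j : ℕ} (hj : j ≤ n)
    (a b : F) :
    frobeniusTrace p k n (a * b ^ p ^ (k * j)) =
      frobeniusTrace p k n (a ^ p ^ (k * (n - j)) * b) := by
  rw [← frobeniusTrace_pow_pow hF (n - j), mul_pow, ← pow_mul, ← pow_add, ← mul_add,
    Nat.add_sub_cancel' hj, ← hF, FiniteField.pow_card]

lemma exists_frobeniusTrace_ne_zero (hp : 1 < p) (hF : Fintype.card F = p ^ (k * n)) :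
    ∃ y : F, frobeniusTrace p k n y ≠ 0 := by
  have hkn : k * n ≠ 0 := by
    rintro h
    simpa [hF, h] using Fintype.one_lt_card (α := F)
  obtain ⟨m, rfl⟩ := Nat.exists_eq_add_one_of_ne_zero (right_ne_zero_of_mul hkn)
  have hlt : ∀ {i j}, i < j → p ^ (k * i) < p ^ (k * j) := fun hij =>
    Nat.pow_lt_pow_right hp
      (Nat.mul_lt_mul_of_pos_left hij (Nat.pos_of_ne_zero (left_ne_zero_of_mul hkn)))
  set P : F[X] := X ^ p ^ (k * m) + ∑ i ∈ range m, X ^ p ^ (k * i)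
  have hlow : degree (∑ i ∈ range m, X ^ p ^ (k * i) : F[X]) < ↑(p ^ (k * m)) := by
    refine (degree_sum_le _ _).trans_lt
      ((Finset.sup_lt_iff (WithBot.bot_lt_coe _)).2 fun i hi => ?_)
    exact_mod_cast (degree_X_pow_le _).trans_lt (WithBot.coe_lt_coe.2 (hlt (mem_range.1 hi)))
  have hmonic : P.Monic := monic_X_pow_add hlow
  have hdeg : P.natDegree = p ^ (k * m) := by
    rw [natDegree_add_eq_left_of_degree_lt (by rwa [degree_X_pow]), natDegree_X_pow]
  have heval : ∀ y, P.eval y = frobeniusTrace p k (m + 1) y := fun y => by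
    simp [P, frobeniusTrace, sum_range_succ, eval_finsetSum, add_comm]
  by_contra! h
  refine hmonic.ne_zero (eq_zero_of_natDegree_lt_card_of_eval_eq_zero P Function.injective_id
    (fun y => (heval y).trans (h y)) ?_)
  rw [hF, hdeg]
  exact hlt m.lt_succ_self

lemma eq_zero_of_forall_frobeniusTrace_mul_eq_zero (hp : 1 < p)
    (hF : Fintype.card F = p ^ (k * n)) {c : F} (h : ∀ y, frobeniusTrace p k n (c * y) = 0) :
    c = 0 := by
  by_contra hc
  obtain ⟨y, hy⟩ := exists_frobeniusTrace_ne_zero hp hF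
  exact hy (by simpa [hc] using h (c⁻¹ * y))

end frobeniusTrace

lemma card_setOf_pow_add_self_eq_zero {F : Type*} [Field F] [Fintype F] {p m : ℕ}
    [Fact p.Prime] (hF : Fintype.card F = p ^ (2 * m)) :
    Nat.card {x : F | x ^ p ^ m + x = 0} = p ^ m := by
  classical
  have : CharP F p := charP_of_card_eq_prime_pow hF
  set Q := p ^ m
  have hm : m ≠ 0 := by
    rintro rfl
    simpa [hF] using Fintype.one_lt_card (α := F)
  have hQ : 1 < Q := Nat.one_lt_pow hm (Fact.out : p.Prime).one_lt
  set L : F[X] := X ^ Q + X with hL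
  have hdeg : L.natDegree = Q := by
    rw [natDegree_add_eq_left_of_degree_lt (by simpa [degree_X_pow] using hQ), natDegree_X_pow]
  have hsep : L.Separable := by
    have hQ0 : (Q : F) = 0 := by simp [Q, hm]
    simp [L, Polynomial.Separable, derivative_X_pow, hQ0, isCoprime_one_right]
  have hdvd : L ∣ X ^ Fintype.card F - X := by
    have hcard : Fintype.card F = Q * Q := by rw [hF, mul_comm, pow_mul, sq]
    have hfrob : X ^ Fintype.card F - X = L ^ Q - L := by
      rw [hL, add_pow_char_pow, ← pow_mul, hcard]
      ring
    exact hfrob ▸ dvd_sub (dvd_pow_self L (by omega)) dvd_rfl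
  have hsplits : L.Splits := by
    refine Splits.of_dvd ?_ (FiniteField.X_pow_card_sub_X_ne_zero F Fintype.one_lt_card) hdvd
    rw [splits_iff_card_roots, FiniteField.roots_X_pow_card_sub_X,
      FiniteField.X_pow_card_sub_X_natDegree_eq F Fintype.one_lt_card]
    rfl
  have hset : {x : F | x ^ Q + x = 0} = L.rootSet F := by
    ext x
    simp [mem_rootSet_of_ne (ne_zero_of_natDegree_gt (hdeg ▸ hQ)), L]
  rw [hset, Nat.card_eq_fintype_card, card_rootSet_eq_natDegree hsep (by simpa using hsplits),
    hdeg]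

theorem stmt_18_general (p k t : ℕ) (hp : p.Prime) (hteven : Even t)
    (F : Type*) [Field F] [Fintype F] (hF : Fintype.card F = p ^ (4 * k * t))
    (μ : F) (hμ0 : μ ≠ 0) (hμsub : μ ^ p ^ (2 * k) = μ) :
    {x : F | ∀ y : F,
        ∑ i ∈ Finset.range (4 * t),
          (μ * (x * y ^ p ^ (k * t) + y * x ^ p ^ (k * t))) ^ p ^ (k * i) = 0} =
      {x : F | x ^ p ^ (2 * k * t) + x = 0} ∧
    Nat.card {x : F | ∀ y : F,
        ∑ i ∈ Finset.range (4 * t),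
          (μ * (x * y ^ p ^ (k * t) + y * x ^ p ^ (k * t))) ^ p ^ (k * i) = 0} =
      (p ^ k) ^ (2 * t) := by
  have : Fact p.Prime := ⟨hp⟩
  have : CharP F p := charP_of_card_eq_prime_pow hF
  have hF' : Fintype.card F = p ^ (k * (4 * t)) := by rw [hF]; ring_nf
  have hμ3 : μ ^ p ^ (k * (3 * t)) = μ := by
    obtain ⟨u, hu⟩ := hteven
    rw [show k * (3 * t) = 2 * k * (3 * u) by rw [hu]; ring, pow_mul]
    exact pow_pow_eq_self_of_pow_eq_self hμsub _
  have hform : ∀ x y : F, ∑ i ∈ range (4 * t),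
      (μ * (x * y ^ p ^ (k * t) + y * x ^ p ^ (k * t))) ^ p ^ (k * i) =
        frobeniusTrace p k (4 * t) (μ * (x ^ p ^ (2 * k * t) + x) ^ p ^ (k * t) * y) := by
    intro x y
    rw [← frobeniusTrace, mul_add, frobeniusTrace_add, ← mul_assoc,
      frobeniusTrace_mul_pow_pow hF' (by omega), show 4 * t - t = 3 * t by omega, mul_pow, hμ3,
      add_pow_char_pow, ← pow_mul, ← pow_add, ← frobeniusTrace_add]
    congr 1
    ring_nf
  have hW : {x : F | ∀ y : F, ∑ i ∈ range (4 * t),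
      (μ * (x * y ^ p ^ (k * t) + y * x ^ p ^ (k * t))) ^ p ^ (k * i) = 0} =
        {x : F | x ^ p ^ (2 * k * t) + x = 0} := by
    ext x
    simp only [Set.mem_ofPred_eq, hform]
    refine ⟨fun h => ?_, fun h y => by simp [h, hp.ne_zero, frobeniusTrace_zero]⟩
    simpa [hμ0, hp.ne_zero] using eq_zero_of_forall_frobeniusTrace_mul_eq_zero hp.one_lt hF' h
  refine ⟨hW, ?_⟩
  rw [hW, ← pow_mul, show k * (2 * t) = 2 * k * t by ring]
  exact card_setOf_pow_add_self_eq_zero (by rw [hF]; ring_nf)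

theorem stmt_18 (p k t : ℕ) (hp : p.Prime) (hodd : Odd p) (hk : 0 < k)
    (ht : 0 < t) (hteven : Even t)
    (F : Type*) [Field F] [Fintype F] (hF : Fintype.card F = p ^ (4 * k * t))
    (μ : F) (hμ0 : μ ≠ 0) (hμsub : μ ^ p ^ (2 * k) = μ) (hμ : μ ^ p ^ k = -μ) :
    {x : F | ∀ y : F,
        ∑ i ∈ Finset.range (4 * t),
          (μ * (x * y ^ p ^ (k * t) + y * x ^ p ^ (k * t))) ^ p ^ (k * i) = 0} =
      {x : F | x ^ p ^ (2 * k * t) + x = 0} ∧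
    Nat.card {x : F | ∀ y : F,
        ∑ i ∈ Finset.range (4 * t),
          (μ * (x * y ^ p ^ (k * t) + y * x ^ p ^ (k * t))) ^ p ^ (k * i) = 0} =
      (p ^ k) ^ (2 * t) :=
  stmt_18_general p k t hp hteven F hF μ hμ0 hμsub
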